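/- arXiv:2302.02417 — 8 statements merged into one kernel-verified Lean document; each statement's English description precedes it below -/
import Mathlib

section
/- Let G be an interval graph on n vertices. Then G or its complement contains a complete bipartite subgraph K_{m,m} with m ≥ ⌊n/4⌋. -/
/-- `G` is an interval graph: the intersection graph of a family of compact intervals. -/
def IsIntervalGraph {V : Type*} (G : SimpleGraph V) : Prop :=
  ∃ f : V → ℝ × ℝ, (∀ v, (f v).1 ≤ (f v).2) ∧
    ∀ u v, G.Adj u v ↔ u ≠ v ∧
      (Set.Icc (f u).1 (f u).2 ∩ Set.Icc (f v).1 (f v).2).Nonempty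

/-- `G` contains a complete bipartite subgraph `K_{m,m}`. -/
def HasBiclique {V : Type*} (G : SimpleGraph V) (m : ℕ) : Prop :=
  ∃ A B : Finset V, Disjoint A B ∧ A.card = m ∧ B.card = m ∧
    ∀ a ∈ A, ∀ b ∈ B, G.Adj a b

/-- one can pick `m` elements of `s` whose `g`-values are below those of the rest. -/
lemma exists_min_subset {α : Type*} [DecidableEq α] (g : α → ℝ) :
    ∀ (m : ℕ) (s : Finset α), m ≤ s.card →
    ∃ t ⊆ s, t.card = m ∧ ∀ i ∈ t, ∀ j ∈ s, j ∉ t → g i ≤ g j := by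
  intro m
  induction m with
  | zero => intro s _; exact ⟨∅, Finset.empty_subset s, rfl, by simp⟩
  | succ m ih =>
    intro s hm
    have hne : s.Nonempty := Finset.card_pos.mp (by omega)
    obtain ⟨x, hxs, hxmin⟩ := s.exists_min_image g hne
    have hm' : m ≤ (s.erase x).card := by
      rw [Finset.card_erase_of_mem hxs]; omega
    obtain ⟨t, hts, htc, hmin⟩ := ih (s.erase x) hm'
    refine ⟨insert x t, ?_, ?_, ?_⟩
    · intro y hy
      rcases Finset.mem_insert.mp hy with rfl | hy
      · exact hxs
      · exact Finset.mem_of_mem_erase (hts hy)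
    · have hxt : x ∉ t := fun hx => (Finset.mem_erase.mp (hts hx)).1 rfl
      rw [Finset.card_insert_of_notMem hxt, htc]
    · intro i hi j hjs hjt
      rcases Finset.mem_insert.mp hi with rfl | hi
      · exact hxmin j hjs
      · have : j ∈ s.erase x := Finset.mem_erase.mpr
          ⟨fun hj => hjt (hj ▸ Finset.mem_insert_self x t), hjs⟩
        exact hmin i hi j this (fun hj => hjt (Finset.mem_insert_of_mem hj))

/-- every interval graph on `n` vertices, or its complement,
contains `K_{m,m}` with `m ≥ ⌊n/4⌋`. -/
theorem stmt_1 {V : Type*} [Fintype V] (G : SimpleGraph V) (h : IsIntervalGraph G) :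
    ∃ m : ℕ, Fintype.card V / 4 ≤ m ∧ (HasBiclique G m ∨ HasBiclique Gᶜ m) := by
  classical
  obtain ⟨f, hle, hadj⟩ := h
  set n := Fintype.card V with hn
  set m := n / 4 with hm
  refine ⟨m, le_refl m, ?_⟩
  rcases Nat.eq_zero_or_pos m with hm0 | hmpos
  · exact Or.inl ⟨∅, ∅, Finset.disjoint_empty_left ∅, by simp [hm0], by simp [hm0], by simp⟩
  have hmn : 4 * m ≤ n := by
    have h4 := Nat.div_mul_le_self n 4
    omega
  -- pick S: the m intervals with smallest right endpoints
  have hmcard : m ≤ (Finset.univ : Finset V).card := by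
    rw [Finset.card_univ, ← hn]; omega
  obtain ⟨S, -, hScard, hSmin⟩ :=
    exists_min_subset (fun v => (f v).2) m Finset.univ hmcard
  have hSne : S.Nonempty := Finset.card_pos.mp (by omega)
  set t : ℝ := S.sup' hSne (fun v => (f v).2) with ht
  have hSt : ∀ v ∈ S, (f v).2 ≤ t := fun v hv => by rw [ht]; exact Finset.le_sup' (fun v => (f v).2) hv
  obtain ⟨v0, hv0S, hv0⟩ := Finset.exists_mem_eq_sup' hSne (fun v => (f v).2)
  have htout : ∀ v, v ∉ S → t ≤ (f v).2 := fun v hv => by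
    rw [ht, hv0]; exact hSmin v0 hv0S v (Finset.mem_univ v) hv
  set C : Finset V := Finset.univ.filter (fun v => t < (f v).1) with hC
  have hSC : Disjoint S C := by
    rw [Finset.disjoint_left]
    intro v hvS hvC
    have h1 : t < (f v).1 := (Finset.mem_filter.mp hvC).2
    exact absurd ((hle v).trans (hSt v hvS)) (not_le.mpr h1)
  by_cases hCcard : m ≤ C.card
  · -- complement biclique: S vs (m elements of C)
    obtain ⟨C', hC'C, hC'card⟩ := Finset.exists_subset_card_eq hCcard
    refine Or.inr ⟨S, C', (hSC.mono_right hC'C), hScard, hC'card, ?_⟩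
    intro a ha b hb
    have hab : a ≠ b := fun he =>
      Finset.disjoint_left.mp (hSC.mono_right hC'C) ha (he ▸ hb)
    rw [SimpleGraph.compl_adj]
    refine ⟨hab, fun hGadj => ?_⟩
    obtain ⟨-, x, hxa, hxb⟩ := (hadj a b).mp hGadj
    have h1 : x ≤ t := hxa.2.trans (hSt a ha)
    have h2 : t < (f b).1 := (Finset.mem_filter.mp (hC'C hb)).2
    exact absurd (h2.trans_le hxb.1) (not_lt.mpr h1)
  · -- clique case: everything outside S ∪ C contains t
    set A : Finset V := Finset.univ \ (S ∪ C) with hA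
    have hAt : ∀ v ∈ A, (f v).1 ≤ t ∧ t ≤ (f v).2 := by
      intro v hv
      rw [hA, Finset.mem_sdiff, Finset.mem_union] at hv
      push_neg at hv
      obtain ⟨-, hvS, hvC⟩ := hv
      rw [hC, Finset.mem_filter] at hvC
      push_neg at hvC
      exact ⟨hvC (Finset.mem_univ v), htout v hvS⟩
    have hAcard : 2 * m ≤ A.card := by
      have hcu : (S ∪ C).card ≤ S.card + C.card := Finset.card_union_le S C
      have hAc : A.card = n - (S ∪ C).card := by
        rw [hA, Finset.card_sdiff_of_subset (Finset.subset_univ _), Finset.card_univ, ← hn]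
      omega
    obtain ⟨A1, hA1A, hA1card⟩ := Finset.exists_subset_card_eq
      (show m ≤ A.card by omega)
    have hA2le : m ≤ (A \ A1).card := by
      rw [Finset.card_sdiff_of_subset hA1A, hA1card]; omega
    obtain ⟨A2, hA2, hA2card⟩ := Finset.exists_subset_card_eq hA2le
    have hdisj : Disjoint A1 A2 :=
      (Finset.sdiff_disjoint.mono_left hA2).symm
    refine Or.inl ⟨A1, A2, hdisj, hA1card, hA2card, ?_⟩
    intro a ha b hb
    have hab : a ≠ b := fun he => Finset.disjoint_left.mp hdisj ha (he ▸ hb)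
    have haA := hAt a (hA1A ha)
    have hbA := hAt b (Finset.mem_sdiff.mp (hA2 hb)).1
    exact (hadj a b).mpr ⟨hab, t, ⟨haA.1, haA.2⟩, ⟨hbA.1, hbA.2⟩⟩
end

section
/- Let G be a cograph on n vertices. Then G or its complement contains a complete bipartite subgraph K_{m,m} with m ≥ ⌊n/4⌋. -/
/-!
By Seinsche's theorem, every set of at least two vertices of a cograph is the union of two
nonempty parts completely joined in `G` or in `Gᶜ`: adding vertices one at a time, an induced `P₄`
is the only obstruction to extending such a split.

Keep a current vertex set `S` together with sets `R` and `Q` completely joined to `S` in `G` and in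
`Gᶜ` respectively, with `|R|, |Q| ≤ k` and `|S| + |R| + |Q| ≥ 4k`; then `|S| ≥ 2k`. Split `S` into
`A`, `B` with `|B| ≤ |A|`, say joined in `G`, so `|A| ≥ k`. If `|B| + |R| ≥ k`, then `A` and `B ∪ R`
contain a `K_{k,k}` of `G`; otherwise recurse on `A` with `B ∪ R` in place of `R`.
-/

/-- `G` is a cograph, i.e. it has no induced path on four vertices. -/
def IsCograph {V : Type*} (G : SimpleGraph V) : Prop :=
  ¬∃ a b c d : V, a ≠ c ∧ a ≠ d ∧ b ≠ d ∧
    G.Adj a b ∧ G.Adj b c ∧ G.Adj c d ∧ ¬G.Adj a c ∧ ¬G.Adj a d ∧ ¬G.Adj b d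

open Finset SimpleGraph

section

variable {V : Type*} {G : SimpleGraph V}

theorem SimpleGraph.IsCompleteBetween.mono_right {s t t' : Set V} (h : G.IsCompleteBetween s t)
    (ht : t' ⊆ t) : G.IsCompleteBetween s t' :=
  fun _ hv _ hw => h hv (ht hw)

theorem isCograph_iff_compl_adj : IsCograph G ↔ ¬∃ a b c d : V,
    G.Adj a b ∧ G.Adj b c ∧ G.Adj c d ∧ Gᶜ.Adj a c ∧ Gᶜ.Adj a d ∧ Gᶜ.Adj b d := by
  simp only [IsCograph, compl_adj]
  constructor <;> rintro h ⟨a, b, c, d, habcd⟩ <;> exact h ⟨a, b, c, d, by tauto⟩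

theorem IsCograph.compl (hG : IsCograph G) : IsCograph Gᶜ := by
  rw [isCograph_iff_compl_adj, compl_compl] at *
  rintro ⟨a, b, c, d, hab, hbc, hcd, hac, had, hbd⟩
  exact hG ⟨b, d, a, c, hbd, had.symm, hac, hab.symm, hbc, hcd.symm⟩

theorem hasBiclique_of_le_card {A B : Finset V} {m : ℕ} (h : G.IsCompleteBetween A B)
    (hA : m ≤ #A) (hB : m ≤ #B) : HasBiclique G m := by
  obtain ⟨A', hA', hA'm⟩ := exists_subset_card_eq hA
  obtain ⟨B', hB', hB'm⟩ := exists_subset_card_eq hB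
  exact ⟨A', B', disjoint_coe.mp (h.disjoint.mono (coe_subset.mpr hA') (coe_subset.mpr hB')),
    hA'm, hB'm, fun a ha b hb => h (hA' ha) (hB' hb)⟩

/-- Otherwise `y - x - v - b₀` would be an induced path. -/
theorem IsCograph.compl_adj_of_adj_of_compl_adj (hG : IsCograph G)
    {A B : Set V} (hsep : Gᶜ.IsCompleteBetween A B) {v b₀ x y : V} (hb₀ : b₀ ∈ B)
    (hvb₀ : G.Adj v b₀)
    (hx : x ∈ A) (hy : y ∈ A) (hvx : G.Adj v x) (hvy : Gᶜ.Adj v y) : Gᶜ.Adj x y := by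
  refine (compl_adj G x y).mpr ⟨?_, fun hxy => ?_⟩
  · rintro rfl
    exact ((compl_adj G v x).mp hvy).2 hvx
  · exact isCograph_iff_compl_adj.mp hG
      ⟨y, x, v, b₀, hxy.symm, hvx.symm, hvb₀, hvy.symm, hsep hy hb₀, hsep hx hb₀⟩

variable [DecidableEq V]

def HasHomogeneousSplit (G : SimpleGraph V) (S : Finset V) : Prop :=
  ∃ A B : Finset V, A ∪ B = S ∧ A.Nonempty ∧ B.Nonempty ∧
    (G.IsCompleteBetween A B ∨ Gᶜ.IsCompleteBetween A B)

theorem hasHomogeneousSplit_compl {S : Finset V} :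
    HasHomogeneousSplit Gᶜ S ↔ HasHomogeneousSplit G S := by
  simp only [HasHomogeneousSplit, compl_compl, or_comm]

theorem HasHomogeneousSplit.exists_card_le {S : Finset V} (h : HasHomogeneousSplit G S) :
    ∃ A B : Finset V, A ∪ B = S ∧ B.Nonempty ∧ #B ≤ #A ∧
      (G.IsCompleteBetween A B ∨ Gᶜ.IsCompleteBetween A B) := by
  obtain ⟨A, B, hAB, hA, hB, hsplit⟩ := h
  rcases le_total #B #A with hBA | hAB_le
  · exact ⟨A, B, hAB, hB, hBA, hsplit⟩
  · refine ⟨B, A, by rw [union_comm, hAB], hA, hAB_le, ?_⟩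
    simpa only [isCompleteBetween_comm] using hsplit

theorem hasHomogeneousSplit_pair {u v : V} (h : v ≠ u) :
    HasHomogeneousSplit G {v, u} := by
  refine ⟨{v}, {u}, (insert_eq v {u}).symm, singleton_nonempty v, singleton_nonempty u, ?_⟩
  by_cases hvu : G.Adj v u
  · exact Or.inl fun _ ha _ hb => by simp_all
  · exact Or.inr fun _ ha _ hb => by simp_all [compl_adj]

section Insert

variable {S A B : Finset V} {v : V}

theorem hasHomogeneousSplit_insert_of_forall_not_adj (hv : v ∉ S) (hAB : A ∪ B = S)
    (hA : A.Nonempty) (hsep : Gᶜ.IsCompleteBetween A B) (hvA : ∀ a ∈ A, ¬G.Adj v a) :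
    HasHomogeneousSplit G (insert v S) := by
  refine ⟨A, insert v B, by rw [union_insert, hAB], hA, insert_nonempty v B, Or.inr ?_⟩
  intro a ha b hb
  rcases mem_insert.mp hb with rfl | hb
  · exact (compl_adj G a b).mpr ⟨fun hab => hv (hab ▸ hAB ▸ mem_union_left B ha),
      fun hab => hvA a ha hab.symm⟩
  · exact hsep ha hb

theorem IsCograph.hasHomogeneousSplit_insert_of_compl (hG : IsCograph G) (hv : v ∉ S)
    (hAB : A ∪ B = S) (hA : A.Nonempty) (hB : B.Nonempty)
    (hsep : Gᶜ.IsCompleteBetween A B) : HasHomogeneousSplit G (insert v S) := by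
  classical
  by_cases hvA : ∀ a ∈ A, ¬G.Adj v a
  · exact hasHomogeneousSplit_insert_of_forall_not_adj hv hAB hA hsep hvA
  by_cases hvB : ∀ b ∈ B, ¬G.Adj v b
  · exact hasHomogeneousSplit_insert_of_forall_not_adj hv (by rwa [union_comm]) hB
      hsep.symm hvB
  by_cases hvS : ∀ w ∈ S, G.Adj v w
  · exact ⟨{v}, S, (insert_eq v S).symm, singleton_nonempty v, hA.mono (hAB ▸ subset_union_left),
      Or.inl fun a ha w hw => (mem_singleton.mp ha) ▸ hvS w hw⟩
  push Not at hvA hvB hvS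
  obtain ⟨a₀, ha₀, hva₀⟩ := hvA
  obtain ⟨b₀, hb₀, hvb₀⟩ := hvB
  obtain ⟨w, hw, hvw⟩ := hvS
  refine ⟨insert v (S.filter (G.Adj v ·)), S.filter (¬G.Adj v ·),
    by rw [insert_union, filter_union_filter_not_eq], insert_nonempty _ _,
    ⟨w, mem_filter.mpr ⟨hw, hvw⟩⟩, Or.inr ?_⟩
  intro x hx y hy
  obtain ⟨hyS, hvy⟩ := mem_filter.mp hy
  have hvy : Gᶜ.Adj v y := (compl_adj G v y).mpr ⟨fun h => hv (h ▸ hyS), hvy⟩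
  rcases mem_insert.mp hx with rfl | hx
  · exact hvy
  obtain ⟨hxS, hvx⟩ := mem_filter.mp hx
  rw [← hAB, mem_union] at hxS hyS
  rcases hxS with hxA | hxB <;> rcases hyS with hyA | hyB
  · exact hG.compl_adj_of_adj_of_compl_adj hsep hb₀ hvb₀ hxA hyA hvx hvy
  · exact hsep hxA hyB
  · exact (hsep hyA hxB).symm
  · exact hG.compl_adj_of_adj_of_compl_adj hsep.symm ha₀ hva₀ hxB hyB hvx hvy

theorem HasHomogeneousSplit.insert (hG : IsCograph G) (h : HasHomogeneousSplit G S)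
    (hv : v ∉ S) : HasHomogeneousSplit G (insert v S) := by
  obtain ⟨A, B, hAB, hA, hB, hjoin | hsep⟩ := h
  · exact hasHomogeneousSplit_compl.mp <|
      hG.compl.hasHomogeneousSplit_insert_of_compl hv hAB hA hB (by rwa [compl_compl])
  · exact hG.hasHomogeneousSplit_insert_of_compl hv hAB hA hB hsep

end Insert

/-- Seinsche's theorem: a cograph on at least two vertices is a join or a disjoint union. -/
theorem IsCograph.hasHomogeneousSplit (hG : IsCograph G) {S : Finset V}
    (hS : 2 ≤ #S) : HasHomogeneousSplit G S := by
  induction S using Finset.induction_on with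
  | empty => simp at hS
  | insert v T hv ih =>
    rw [card_insert_of_notMem hv] at hS
    by_cases hT : 2 ≤ #T
    · exact (ih hT).insert hG hv
    obtain ⟨u, rfl⟩ := card_eq_one.mp (by omega : #T = 1)
    exact hasHomogeneousSplit_pair (by simpa using hv)

theorem hasBiclique_or_of_isCompleteBetween_split {k : ℕ} {A B R Q : Finset V}
    (ih : ∀ R' : Finset V, G.IsCompleteBetween R' A → #R' ≤ k → 4 * k ≤ #A + #R' + #Q →
      HasBiclique G k ∨ HasBiclique Gᶜ k)
    (hjoin : G.IsCompleteBetween A B) (hBA : #B ≤ #A) (hR : G.IsCompleteBetween R ↑(A ∪ B))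
    (hRk : #R ≤ k) (hQk : #Q ≤ k) (hk : 4 * k ≤ #(A ∪ B) + #R + #Q) :
    HasBiclique G k ∨ HasBiclique Gᶜ k := by
  rw [card_union_of_disjoint (disjoint_coe.mp hjoin.disjoint)] at hk
  have hRB : Disjoint R B :=
    disjoint_coe.mp (hR.disjoint.mono_right (coe_subset.mpr subset_union_right))
  by_cases hbig : k ≤ #B + #R
  · refine Or.inl (hasBiclique_of_le_card (A := A) (B := B ∪ R) ?_ (by omega)
      (by rw [card_union_of_disjoint hRB.symm]; omega))
    intro a ha x hx
    rcases mem_union.mp hx with hxB | hxR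
    · exact hjoin ha hxB
    · exact (hR hxR (mem_union_left B ha)).symm
  · refine ih (R ∪ B) ?_ (by rw [card_union_of_disjoint hRB]; omega)
      (by rw [card_union_of_disjoint hRB]; omega)
    intro x hx a ha
    rcases mem_union.mp hx with hxR | hxB
    · exact hR hxR (mem_union_left B ha)
    · exact (hjoin ha hxB).symm

theorem IsCograph.hasBiclique_or_of_isCompleteBetween (hG : IsCograph G) {k : ℕ}
    {S R Q : Finset V} (hR : G.IsCompleteBetween R S) (hQ : Gᶜ.IsCompleteBetween Q S)
    (hRk : #R ≤ k) (hQk : #Q ≤ k) (hk : 4 * k ≤ #S + #R + #Q) :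
    HasBiclique G k ∨ HasBiclique Gᶜ k := by
  induction S using Finset.strongInduction generalizing G R Q with
  | H S ih =>
  rcases Nat.eq_zero_or_pos k with rfl | hk₀
  · exact Or.inl ⟨∅, ∅, by simp⟩
  obtain ⟨A, B, rfl, hB, hBA, hsplit⟩ :=
    (hG.hasHomogeneousSplit (S := S) (by omega)).exists_card_le
  have hAB : Disjoint A B := by
    rcases hsplit with hjoin | hjoin <;> exact disjoint_coe.mp hjoin.disjoint
  have hAS : A ⊂ A ∪ B := left_lt_sup.mpr fun hBA => hB.ne_empty (hAB.symm.eq_bot_of_le hBA)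
  have hRA : G.IsCompleteBetween R A := hR.mono_right (coe_subset.mpr hAS.subset)
  have hQA : Gᶜ.IsCompleteBetween Q A := hQ.mono_right (coe_subset.mpr hAS.subset)
  rcases hsplit with hjoin | hjoin
  · exact hasBiclique_or_of_isCompleteBetween_split
      (fun R' hR' hR'k hk' => ih A hAS hG hR' hQA hR'k hQk hk') hjoin hBA hR hRk hQk hk
  · have := hasBiclique_or_of_isCompleteBetween_split (G := Gᶜ) (R := Q) (Q := R)
      (fun Q' hQ' hQ'k hk' => by
        rw [compl_compl, or_comm]
        exact ih A hAS hG hRA hQ' hRk hQ'k (by omega))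
      hjoin hBA hQ hQk hRk (by omega)
    rwa [compl_compl, or_comm] at this

end

/-- every cograph on `n` vertices, or its complement,
contains `K_{m,m}` with `m ≥ ⌊n/4⌋`. -/
theorem stmt_2 {V : Type*} [Fintype V] (G : SimpleGraph V) (h : IsCograph G) :
    ∃ m : ℕ, Fintype.card V / 4 ≤ m ∧ (HasBiclique G m ∨ HasBiclique Gᶜ m) := by
  classical
  refine ⟨Fintype.card V / 4, le_rfl, h.hasBiclique_or_of_isCompleteBetween (S := univ)
    (R := ∅) (Q := ∅) (by simp [IsCompleteBetween]) (by simp [IsCompleteBetween])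
    (by simp) (by simp) ?_⟩
  simpa using Nat.mul_div_le (Fintype.card V) 4
end

section
/- For every k ≥ 1 there exists an interval graph G on 4k vertices such that neither G nor its complement contains K_{k+1,k+1} as a subgraph. -/
open Finset

namespace Fin

variable {n k : ℕ}

theorem card_le_of_div_mem_Ico (hk : 0 < k) {A : Finset (Fin n)} (lo w : ℕ)
    (h : ∀ v ∈ A, lo ≤ (v : ℕ) / k ∧ (v : ℕ) / k < lo + w) : #A ≤ w * k := by
  have hsub : A.map valEmbedding ⊆ Ico (lo * k) ((lo + w) * k) := by
    intro x hx
    obtain ⟨v, hv, rfl⟩ := mem_map.1 hx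
    obtain ⟨hlo, hhi⟩ := h v hv
    exact mem_Ico.2 ⟨(Nat.le_div_iff_mul_le hk).1 hlo, (Nat.div_lt_iff_lt_mul hk).1 hhi⟩
  calc #A = #(A.map valEmbedding) := (card_map _).symm
    _ ≤ #(Ico (lo * k) ((lo + w) * k)) := card_le_card hsub
    _ = w * k := by rw [Nat.card_Ico, add_mul, Nat.add_sub_cancel_left]

theorem exists_div_ne_of_lt_card (hk : 0 < k) {A : Finset (Fin n)} (hA : k < #A) :
    ∃ a ∈ A, ∃ b ∈ A, (a : ℕ) / k ≠ (b : ℕ) / k := by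
  obtain ⟨a, ha⟩ := card_pos.1 (k.zero_le.trans_lt hA)
  by_contra! hsame
  have := card_le_of_div_mem_Ico hk ((a : ℕ) / k) 1 fun v hv => by
    have := hsame a ha v hv
    omega
  omega

end Fin

theorem Set.Icc_inter_Icc_add_one_nonempty_iff (a b : ℝ) :
    (Set.Icc a (a + 1) ∩ Set.Icc b (b + 1)).Nonempty ↔ a ≤ b + 1 ∧ b ≤ a + 1 := by
  rw [Set.Icc_inter_Icc, Set.nonempty_Icc, max_le_iff, le_min_iff, le_min_iff]
  constructor
  · rintro ⟨⟨-, hab⟩, hba, -⟩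
    exact ⟨hab, hba⟩
  · rintro ⟨hab, hba⟩
    exact ⟨⟨by linarith, hab⟩, hba, by linarith⟩

def blockGraph (n k : ℕ) : SimpleGraph (Fin n) where
  Adj u v := u ≠ v ∧ (u : ℕ) / k ≤ (v : ℕ) / k + 1 ∧ (v : ℕ) / k ≤ (u : ℕ) / k + 1
  symm := ⟨fun _ _ ⟨hne, huv, hvu⟩ => ⟨hne.symm, hvu, huv⟩⟩
  loopless := ⟨fun _ h => h.1 rfl⟩

namespace blockGraph

variable {n k : ℕ}

theorem adj_iff {u v : Fin n} : (blockGraph n k).Adj u v ↔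
    u ≠ v ∧ (u : ℕ) / k ≤ (v : ℕ) / k + 1 ∧ (v : ℕ) / k ≤ (u : ℕ) / k + 1 :=
  Iff.rfl

theorem isIntervalGraph : IsIntervalGraph (blockGraph n k) := by
  refine ⟨fun v => ((((v : ℕ) / k : ℕ) : ℝ), (((v : ℕ) / k : ℕ) : ℝ) + 1), fun v => by simp,
    fun u v => ?_⟩
  dsimp only
  rw [adj_iff, Set.Icc_inter_Icc_add_one_nonempty_iff]
  norm_cast

theorem not_hasBiclique (hk : 0 < k) : ¬HasBiclique (blockGraph n k) (k + 1) := by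
  rintro ⟨A, B, hAB, hA, hB, hadj⟩
  obtain ⟨a₀, ha₀, a₁, ha₁, ha⟩ := Fin.exists_div_ne_of_lt_card hk (A := A) (by omega)
  obtain ⟨b₀, hb₀, b₁, hb₁, hb⟩ := Fin.exists_div_ne_of_lt_card hk (A := B) (by omega)
  have near : ∀ a ∈ A, ∀ b ∈ B, (a : ℕ) / k ≤ (b : ℕ) / k + 1 ∧ (b : ℕ) / k ≤ (a : ℕ) / k + 1 :=
    fun a ha b hb => (adj_iff.1 (hadj a ha b hb)).2
  have h₀₀ := near a₀ ha₀ b₀ hb₀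
  have h₀₁ := near a₀ ha₀ b₁ hb₁
  have h₁₀ := near a₁ ha₁ b₀ hb₀
  have h₁₁ := near a₁ ha₁ b₁ hb₁
  -- Both pairs occupy exactly the blocks `m, m + 1` with `m = min (a₀ / k) (a₁ / k)`.
  have hcard := Fin.card_le_of_div_mem_Ico hk (A := A ∪ B) (min ((a₀ : ℕ) / k) ((a₁ : ℕ) / k)) 2
    fun v hv => by
      rcases mem_union.1 hv with hv | hv
      · have := near v hv b₀ hb₀
        have := near v hv b₁ hb₁
        omega
      · have := near a₀ ha₀ v hv
        have := near a₁ ha₁ v hv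
        omega
  rw [card_union_of_disjoint hAB] at hcard
  omega

theorem not_hasBiclique_compl (hk : 0 < k) (hn : n ≤ 4 * k) :
    ¬HasBiclique (blockGraph n k)ᶜ (k + 1) := by
  rintro ⟨A, B, -, hA, hB, hadj⟩
  obtain ⟨a₀, ha₀, a₁, ha₁, ha⟩ := Fin.exists_div_ne_of_lt_card hk (A := A) (by omega)
  obtain ⟨b₀, hb₀, b₁, hb₁, hb⟩ := Fin.exists_div_ne_of_lt_card hk (A := B) (by omega)
  have far : ∀ a ∈ A, ∀ b ∈ B, (a : ℕ) / k + 2 ≤ (b : ℕ) / k ∨ (b : ℕ) / k + 2 ≤ (a : ℕ) / k := by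
    intro a ha b hb
    obtain ⟨hne, hnadj⟩ := hadj a ha b hb
    rw [adj_iff, not_and] at hnadj
    have := hnadj hne
    omega
  have lt_four (v : Fin n) : (v : ℕ) / k < 4 := (Nat.div_lt_iff_lt_mul hk).2 (v.2.trans_le hn)
  have := far a₀ ha₀ b₀ hb₀
  have := far a₀ ha₀ b₁ hb₁
  have := far a₁ ha₁ b₀ hb₀
  have := far a₁ ha₁ b₁ hb₁
  have := lt_four a₀
  have := lt_four a₁
  have := lt_four b₀
  have := lt_four b₁
  generalize (a₀ : ℕ) / k = x₀ at *
  generalize (a₁ : ℕ) / k = x₁ at *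
  generalize (b₀ : ℕ) / k = y₀ at *
  generalize (b₁ : ℕ) / k = y₁ at *
  omega

end blockGraph

/-- for every `k ≥ 1` there is an interval graph on `4k` vertices
such that neither it nor its complement contains `K_{k+1,k+1}`. -/
theorem stmt_6 (k : ℕ) (hk : 1 ≤ k) :
    ∃ G : SimpleGraph (Fin (4 * k)), IsIntervalGraph G ∧
      ¬HasBiclique G (k + 1) ∧ ¬HasBiclique Gᶜ (k + 1) :=
  ⟨blockGraph (4 * k) k, blockGraph.isIntervalGraph, blockGraph.not_hasBiclique hk,
    blockGraph.not_hasBiclique_compl hk le_rfl⟩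
end

section
/- Let F be a finite family of compact intervals on the real line with all endpoints distinct, partitioned into F₁ and F₂ with |F₁| = ⌈|F|/2⌉ and |F₂| = ⌊|F|/2⌋. Then there exist subfamilies H₁ ⊆ F₁ and H₂ ⊆ F₂ with |H_i| ≥ ⌈|F_i|/3⌉ for i = 1, 2, such that either every interval of H₁ intersects every interval of H₂, or every interval of H₁ is disjoint from every interval of H₂. -/
open Finset

/-- Order statistic: there is a threshold `a` with at least `k` values `f i ≤ a`
(for `i ∈ A`) and fewer than `k` values `f i < a`. -/
private lemma exists_thresh {ι : Type*} (A : Finset ι) (f : ι → ℝ) (k : ℕ)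
    (hk1 : 1 ≤ k) (hk : k ≤ A.card) :
    ∃ a : ℝ, k ≤ (A.filter (fun i => f i ≤ a)).card ∧
      (A.filter (fun i => f i < a)).card < k := by
  classical
  have hAne : A.Nonempty := card_pos.mp (hk1.trans hk)
  have hIne : (A.image f).Nonempty := hAne.image f
  set T : Finset ℝ := (A.image f).filter
      (fun a => k ≤ (A.filter (fun i => f i ≤ a)).card) with hTdef
  have hTne : T.Nonempty := by
    refine ⟨(A.image f).max' hIne, ?_⟩
    rw [hTdef, mem_filter]
    refine ⟨max'_mem _ _, ?_⟩
    have heq : A.filter (fun i => f i ≤ (A.image f).max' hIne) = A := by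
      apply filter_true_of_mem
      intro i hi
      exact le_max' _ _ (mem_image_of_mem f hi)
    rw [heq]; exact hk
  set a : ℝ := T.min' hTne with hadef
  have haT : a ∈ T := min'_mem _ _
  rw [hTdef, mem_filter] at haT
  refine ⟨a, haT.2, ?_⟩
  by_contra hcon
  push_neg at hcon
  set B : Finset ι := A.filter (fun i => f i < a) with hBdef
  have hBne : B.Nonempty := card_pos.mp (hk1.trans hcon)
  have hBIne : (B.image f).Nonempty := hBne.image f
  have ha''mem : (B.image f).max' hBIne ∈ B.image f := max'_mem _ _
  obtain ⟨i0, hi0B, hfi0⟩ := mem_image.mp ha''mem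
  have hi0A : i0 ∈ A := (mem_filter.mp hi0B).1
  have ha''lt : (B.image f).max' hBIne < a := hfi0 ▸ (mem_filter.mp hi0B).2
  have hsub : B ⊆ A.filter (fun i => f i ≤ (B.image f).max' hBIne) := by
    intro i hiB
    rw [mem_filter]
    exact ⟨(mem_filter.mp hiB).1, le_max' _ _ (mem_image_of_mem f hiB)⟩
  have ha''T : (B.image f).max' hBIne ∈ T := by
    rw [hTdef, mem_filter]
    exact ⟨hfi0 ▸ mem_image_of_mem f hi0A, le_trans hcon (card_le_card hsub)⟩
  exact absurd (min'_le T _ ha''T) (not_le.mpr ha''lt)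

private lemma card_split {ι : Type*} (A : Finset ι) (P Q : ι → Prop)
    [DecidablePred P] [DecidablePred Q] :
    A.card ≤ (A.filter (fun i => P i ∧ Q i)).card +
      (A.filter (fun i => ¬ P i)).card + (A.filter (fun i => ¬ Q i)).card := by
  classical
  have hsub : A ⊆ (A.filter (fun i => P i ∧ Q i)) ∪
      ((A.filter (fun i => ¬ P i)) ∪ (A.filter (fun i => ¬ Q i))) := by
    intro i hi
    simp only [mem_union, mem_filter]
    by_cases hP : P i <;> by_cases hQ : Q i <;> tauto
  have h1 := card_le_card hsub
  have h2 := card_union_le (A.filter (fun i => P i ∧ Q i))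
      ((A.filter (fun i => ¬ P i)) ∪ (A.filter (fun i => ¬ Q i)))
  have h3 := card_union_le (A.filter (fun i => ¬ P i)) (A.filter (fun i => ¬ Q i))
  omega

/-- for a family of `N` compact intervals with all endpoints distinct,
split into `F₁` of size `⌈N/2⌉` and its complement of size `⌊N/2⌋`, there are
subfamilies `H₁ ⊆ F₁`, `H₂ ⊆ F₂` of sizes at least `⌈|Fᵢ|/3⌉` such that either all
pairs across meet or all pairs across are disjoint. -/
theorem stmt_10 (N : ℕ) (F : Fin N → ℝ × ℝ) (hle : ∀ i, (F i).1 ≤ (F i).2)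
    (hinj : Function.Injective
      (fun p : Fin N × Bool => if p.2 then (F p.1).1 else (F p.1).2))
    (F₁ : Finset (Fin N)) (hcard : F₁.card = (N + 1) / 2) :
    ∃ H₁ H₂ : Finset (Fin N), H₁ ⊆ F₁ ∧ H₂ ⊆ F₁ᶜ ∧
      (F₁.card + 2) / 3 ≤ H₁.card ∧ (F₁ᶜ.card + 2) / 3 ≤ H₂.card ∧
      ((∀ i ∈ H₁, ∀ j ∈ H₂,
          (Set.Icc (F i).1 (F i).2 ∩ Set.Icc (F j).1 (F j).2).Nonempty) ∨
       (∀ i ∈ H₁, ∀ j ∈ H₂,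
          Set.Icc (F i).1 (F i).2 ∩ Set.Icc (F j).1 (F j).2 = ∅)) := by
  classical
  -- helper: cross intersection
  have key : ∀ i j : Fin N, (F i).1 ≤ (F j).2 → (F j).1 ≤ (F i).2 →
      (Set.Icc (F i).1 (F i).2 ∩ Set.Icc (F j).1 (F j).2).Nonempty := by
    intro i j h1 h2
    exact ⟨max (F i).1 (F j).1,
      ⟨⟨le_max_left _ _, max_le (hle i) h2⟩, ⟨le_max_right _ _, max_le h1 (hle j)⟩⟩⟩
  have emp : ∀ i j : Fin N, (F i).2 < (F j).1 →
      Set.Icc (F i).1 (F i).2 ∩ Set.Icc (F j).1 (F j).2 = ∅ := by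
    intro i j h
    apply Set.eq_empty_iff_forall_notMem.mpr
    rintro x ⟨⟨_, h1⟩, ⟨h2, _⟩⟩
    linarith
  by_cases hm : F₁.card = 0
  · refine ⟨∅, F₁ᶜ, empty_subset _, Subset.rfl, by omega, by omega, Or.inl ?_⟩
    intro i hi
    simp at hi
  by_cases hn : F₁ᶜ.card = 0
  · refine ⟨F₁, ∅, Subset.rfl, empty_subset _, by omega, by omega, Or.inl ?_⟩
    intro i _ j hj
    simp at hj
  -- main case
  set α : ℕ := (F₁.card + 2) / 3 with hα
  set β : ℕ := (F₁ᶜ.card + 2) / 3 with hβ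
  obtain ⟨a, hA_le, hA_lt⟩ :=
    exists_thresh F₁ (fun i => (F i).2) α (by omega) (by omega)
  obtain ⟨c, hc_le, hc_lt⟩ :=
    exists_thresh F₁ (fun i => -(F i).1) α (by omega) (by omega)
  obtain ⟨b, hB_le, hB_lt⟩ :=
    exists_thresh F₁ᶜ (fun j => (F j).2) β (by omega) (by omega)
  obtain ⟨d, hd_le, hd_lt⟩ :=
    exists_thresh F₁ᶜ (fun j => -(F j).1) β (by omega) (by omega)
  have hA'_le : α ≤ (F₁.filter (fun i => -c ≤ (F i).1)).card := by
    simpa only [neg_le] using hc_le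
  have hA'_lt : (F₁.filter (fun i => -c < (F i).1)).card < α := by
    simpa only [neg_lt] using hc_lt
  have hB'_le : β ≤ (F₁ᶜ.filter (fun j => -d ≤ (F j).1)).card := by
    simpa only [neg_le] using hd_le
  have hB'_lt : (F₁ᶜ.filter (fun j => -d < (F j).1)).card < β := by
    simpa only [neg_lt] using hd_lt
  rcases lt_or_ge a (-d) with h1 | h1
  · -- a < b' : disjoint families
    refine ⟨F₁.filter (fun i => (F i).2 ≤ a), F₁ᶜ.filter (fun j => -d ≤ (F j).1),
      filter_subset _ _, filter_subset _ _, hA_le, hB'_le, Or.inr ?_⟩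
    intro i hi j hj
    rw [mem_filter] at hi hj
    exact emp i j (by linarith [hi.2, hj.2])
  rcases lt_or_ge b (-c) with h2 | h2
  · -- b < a' : disjoint families
    refine ⟨F₁.filter (fun i => -c ≤ (F i).1), F₁ᶜ.filter (fun j => (F j).2 ≤ b),
      filter_subset _ _, filter_subset _ _, hA'_le, hB_le, Or.inr ?_⟩
    intro i hi j hj
    rw [mem_filter] at hi hj
    rw [Set.inter_comm]
    exact emp j i (by linarith [hi.2, hj.2])
  rcases le_or_gt (-d) b with h3 | h3
  · -- window [-d, b] : F₁ᶜ has ≥ β intervals containing it, F₁ has ≥ α meeting it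
    refine ⟨F₁.filter (fun i => -d ≤ (F i).2 ∧ (F i).1 ≤ b),
      F₁ᶜ.filter (fun j => (F j).1 ≤ -d ∧ b ≤ (F j).2),
      filter_subset _ _, filter_subset _ _, ?_, ?_, Or.inl ?_⟩
    · have hs := card_split F₁ (fun i => -d ≤ (F i).2) (fun i => (F i).1 ≤ b)
      simp only [not_le] at hs
      have e1 : (F₁.filter (fun i => (F i).2 < -d)).card ≤
          (F₁.filter (fun i => (F i).2 < a)).card := by
        apply card_le_card
        intro i hi
        rw [mem_filter] at hi ⊢
        exact ⟨hi.1, lt_of_lt_of_le hi.2 h1⟩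
      have e2 : (F₁.filter (fun i => b < (F i).1)).card ≤
          (F₁.filter (fun i => -c < (F i).1)).card := by
        apply card_le_card
        intro i hi
        rw [mem_filter] at hi ⊢
        exact ⟨hi.1, lt_of_le_of_lt h2 hi.2⟩
      omega
    · have hs := card_split F₁ᶜ (fun j => (F j).1 ≤ -d) (fun j => b ≤ (F j).2)
      simp only [not_le] at hs
      omega
    · intro i hi j hj
      rw [mem_filter] at hi hj
      exact key i j (by linarith [hi.2.2, hj.2.2]) (by linarith [hi.2.1, hj.2.1])
  · -- b < -d ; then -c ≤ b < -d ≤ a, window [-c, a]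
    refine ⟨F₁.filter (fun i => (F i).1 ≤ -c ∧ a ≤ (F i).2),
      F₁ᶜ.filter (fun j => -c ≤ (F j).2 ∧ (F j).1 ≤ a),
      filter_subset _ _, filter_subset _ _, ?_, ?_, Or.inl ?_⟩
    · have hs := card_split F₁ (fun i => (F i).1 ≤ -c) (fun i => a ≤ (F i).2)
      simp only [not_le] at hs
      omega
    · have hs := card_split F₁ᶜ (fun j => -c ≤ (F j).2) (fun j => (F j).1 ≤ a)
      simp only [not_le] at hs
      have e1 : (F₁ᶜ.filter (fun j => (F j).2 < -c)).card ≤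
          (F₁ᶜ.filter (fun j => (F j).2 < b)).card := by
        apply card_le_card
        intro j hj
        rw [mem_filter] at hj ⊢
        exact ⟨hj.1, lt_of_lt_of_le hj.2 h2⟩
      have e2 : (F₁ᶜ.filter (fun j => a < (F j).1)).card ≤
          (F₁ᶜ.filter (fun j => -d < (F j).1)).card := by
        apply card_le_card
        intro j hj
        rw [mem_filter] at hj ⊢
        exact ⟨hj.1, lt_of_le_of_lt h1 hj.2⟩
      omega
    · intro i hi j hj
      rw [mem_filter] at hi hj
      exact key i j (by linarith [hi.2.1, hj.2.1]) (by linarith [hi.2.2, hj.2.2])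
end

section
/- In the setting of the trunk of a tree T with max degree 3 and k ≥ 3 leaves: every leaf ℓ of Trunk(T) satisfies ℓ = r_i for at least two distinct indices i, where r_i is the closest degree-3 vertex of T to the i-th leaf v_i of T. -/
/-!
Let `ℓ` be a leaf of the trunk `S`. Because `ℓ` has at most one neighbour in `S`, removing it
keeps `S` connected, so minimality of `S` forces `ℓ = r v₀` for some leaf `v₀`; hence `ℓ` has
degree three and at least two neighbours `x₁, x₂` outside `S`. Beyond each `xᵢ` (in the
component of `T - ℓ` containing it) a longest path from `xᵢ` ends in a leaf `vᵢ`. The path from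
`vᵢ` to `r vᵢ ∈ S` must pass through `ℓ`, since otherwise the branch of `xᵢ` would meet `S` and
the connected set `S` would reach it through `ℓ` by an edge other than `ℓxᵢ`, closing a cycle.
So `r vᵢ = ℓ`, and `v₁ ≠ v₂` because the branches of `x₁` and `x₂` are disjoint.
-/

lemma Set.nontrivial_diff_of_subsingleton_inter {α : Type*} {A B : Set α} (hA : 2 < A.ncard)
    (hBA : (B ∩ A).Subsingleton) : (A \ B).Nontrivial := by
  have := (Set.finite_of_ncard_pos (by omega : 0 < A.ncard)).to_subtype
  have hsplit := Set.ncard_inter_add_ncard_sdiff_eq_ncard A B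
  rw [Set.inter_comm] at hsplit
  have := Set.ncard_le_one_iff_subsingleton.mpr hBA
  exact Set.one_lt_ncard_iff_nontrivial.mp (by omega)

namespace SimpleGraph

variable {V : Type*} {G : SimpleGraph V}

lemma exists_isPath_support_subset_of_preconnected_induce {s : Set V}
    (hs : (G.induce s).Preconnected) {a b : V} (ha : a ∈ s) (hb : b ∈ s) :
    ∃ p : G.Walk a b, p.IsPath ∧ ∀ x ∈ p.support, x ∈ s := by
  classical
  obtain ⟨q⟩ := hs ⟨a, ha⟩ ⟨b, hb⟩
  let p : G.Walk a b := q.map (Embedding.induce s).toHom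
  refine ⟨p.toPath, p.toPath.isPath, fun x hx => ?_⟩
  obtain ⟨⟨y, hy⟩, -, rfl⟩ := List.mem_map.mp <| (Walk.support_map _ q) ▸
    p.support_toPath_subset_support hx
  exact hy

lemma preconnected_induce_diff_singleton {s : Set V} (hs : (G.induce s).Preconnected) {ℓ : V}
    (hℓ : (s ∩ G.neighborSet ℓ).Subsingleton) : (G.induce (s \ {ℓ})).Preconnected := by
  rintro ⟨a, ha, haℓ⟩ ⟨b, hb, hbℓ⟩
  obtain ⟨p, hp, hps⟩ := exists_isPath_support_subset_of_preconnected_induce hs ha hb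
  have hℓp : ℓ ∉ p.support := by
    intro hmem
    obtain ⟨i, rfl, hi⟩ := Walk.mem_support_iff_exists_getVert.mp hmem
    have hi0 : i ≠ 0 := by rintro rfl; simp at haℓ
    have hil : i < p.length := lt_of_le_of_ne hi (by rintro rfl; simp at hbℓ)
    have hsub : p.toSubgraph.neighborSet (p.getVert i) ⊆ s ∩ G.neighborSet (p.getVert i) :=
      fun y hy => ⟨hps y (p.mem_verts_toSubgraph.mp hy.snd_mem), hy.adj_sub⟩
    obtain ⟨y, z, hyz, hyz'⟩ :=
      Set.ncard_eq_two.mp (hp.ncard_neighborSet_toSubgraph_internal_eq_two hi0 hil)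
    exact hyz (hℓ.anti hsub (by simp [hyz']) (by simp [hyz']))
  exact (p.induce (s \ {ℓ}) fun x hx => ⟨hps x hx, fun h => hℓp (h ▸ hx)⟩).reachable

lemma IsAcyclic.mem_support_of_adj_of_adj (hG : G.IsAcyclic) {ℓ x y : V} (hx : G.Adj ℓ x)
    (hy : G.Adj ℓ y) (hxy : x ≠ y) (W : G.Walk x y) : ℓ ∈ W.support := by
  have := isBridge_iff_forall_walk_mem_edges.mp (isAcyclic_iff_forall_adj_isBridge.mp hG hx)
    (.cons hy W.reverse)
  rw [Walk.edges_cons, List.mem_cons, Walk.edges_reverse, List.mem_reverse] at this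
  rcases this with h | h
  · simp [hxy, hy.ne] at h
  · exact W.fst_mem_support_of_mem_edges h

lemma IsAcyclic.exists_walk_avoiding_to_ncard_neighborSet_eq_one [Finite V] (hG : G.IsAcyclic)
    {ℓ x : V} (hx : G.Adj ℓ x) :
    ∃ (v : V) (W : G.Walk x v), ℓ ∉ W.support ∧ (G.neighborSet v).ncard = 1 := by
  have := Fintype.ofFinite V
  let lengths := {n | ∃ (v : V) (p : G.Walk x v), p.IsPath ∧ ℓ ∉ p.support ∧ p.length = n}
  have hfin : lengths.Finite := (Set.finite_lt_nat (Fintype.card V)).subset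
    fun n ⟨_, _, hp, _, hn⟩ => hn ▸ hp.length_lt
  obtain ⟨_, ⟨v, p, hp, hℓp, rfl⟩, hmax⟩ :=
    hfin.exists_maximal ⟨0, x, .nil, .nil, by simpa using hx.ne, rfl⟩
  refine ⟨v, p, hℓp, Set.ncard_eq_one.mpr ⟨(p.cons hx).penultimate, ?_⟩⟩
  have hq : (p.cons hx).IsPath := hp.cons hℓp
  ext z
  refine ⟨fun hz => ?_, fun hz => hz ▸ (Walk.adj_penultimate Walk.not_nil_cons).symm⟩
  rw [mem_neighborSet] at hz
  by_contra hne
  have hzq : z ∉ (p.cons hx).support := fun h => hne (hG.eq_penultimate_of_adj_end hq hz h)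
  rw [Walk.support_cons, List.mem_cons, not_or] at hzq
  have := hmax ⟨z, p.concat hz, hp.concat hzq.2 hz, by simp [hℓp, Ne.symm hzq.1], rfl⟩ (by simp)
  simp at this

lemma IsAcyclic.mem_support_of_adj_of_notMem_of_mem (hG : G.IsAcyclic) {s : Set V}
    (hs : (G.induce s).Preconnected) {ℓ x y : V} (hℓ : ℓ ∈ s) (hx : G.Adj ℓ x) (hxs : x ∉ s)
    (hy : y ∈ s) (W : G.Walk x y) : ℓ ∈ W.support := by
  by_contra hℓW
  obtain ⟨p, hp, hps⟩ := exists_isPath_support_subset_of_preconnected_induce hs hℓ hy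
  have hp' : ¬p.Nil := Walk.not_nil_of_ne fun h => hℓW (h ▸ W.end_mem_support)
  rw [← p.cons_tail_eq hp', Walk.cons_isPath_iff] at hp
  have hsnd : p.snd ∈ s := hps _ (p.getVert_mem_support 1)
  have := hG.mem_support_of_adj_of_adj hx (p.adj_snd hp') (fun h => hxs (h ▸ hsnd))
    (W.append p.tail.reverse)
  rw [Walk.mem_support_append_iff, Walk.support_reverse, List.mem_reverse] at this
  exact this.elim hℓW hp.2

lemma mem_of_minimal_connected_induce {R s : Set V} (hR : R.Nonempty) (hRs : R ⊆ s)
    (hs : (G.induce s).Connected) (hmin : ∀ t, R ⊆ t → (G.induce t).Connected → s ⊆ t)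
    {ℓ : V} (hℓ : ℓ ∈ s) (hℓs : (s ∩ G.neighborSet ℓ).Subsingleton) : ℓ ∈ R := by
  by_contra hℓR
  have hRt : R ⊆ s \ {ℓ} := fun u hu => ⟨hRs hu, fun h => hℓR (h ▸ hu)⟩
  have : Nonempty ↑(s \ {ℓ}) := (hR.mono hRt).to_subtype
  exact (hmin _ hRt ⟨preconnected_induce_diff_singleton hs.preconnected hℓs⟩ hℓ).2 rfl

end SimpleGraph

open SimpleGraph

theorem stmt_13_general {α : Type*} [Fintype α] (T : SimpleGraph α) (hT : T.IsTree)
    (k : ℕ) (hk : 3 ≤ k)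
    (hleaves : ({v | ({w | T.Adj v w} : Set α).ncard = 1} : Set α).ncard = k)
    (r : α → α)
    (hr : ∀ v : α, ({w | T.Adj v w} : Set α).ncard = 1 →
      ({w | T.Adj (r v) w} : Set α).ncard = 3 ∧
      ∀ (p : T.Walk v (r v)), p.IsPath →
        ∀ w ∈ p.support, ({x | T.Adj w x} : Set α).ncard = 3 → w = r v)
    (S : Set α)
    (hS₁ : ∀ v : α, ({w | T.Adj v w} : Set α).ncard = 1 → r v ∈ S)
    (hS₂ : (T.induce S).Connected)
    (hS₃ : ∀ S' : Set α, (∀ v : α, ({w | T.Adj v w} : Set α).ncard = 1 → r v ∈ S') →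
      (T.induce S').Connected → S ⊆ S') :
    ∀ ℓ ∈ S, ({y | y ∈ S ∧ T.Adj ℓ y} : Set α).ncard ≤ 1 →
      ∃ v w : α, v ≠ w ∧
        ({x | T.Adj v x} : Set α).ncard = 1 ∧
        ({x | T.Adj w x} : Set α).ncard = 1 ∧
        r v = ℓ ∧ r w = ℓ := by
  intro ℓ hℓS hℓdeg
  have hℓnbr : (S ∩ T.neighborSet ℓ).Subsingleton := Set.ncard_le_one_iff_subsingleton.mp hℓdeg
  have hleaf : {v | ({w | T.Adj v w} : Set α).ncard = 1}.Nonempty :=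
    Set.nonempty_of_ncard_ne_zero (by omega)
  obtain ⟨v₀, hv₀, rfl⟩ : ℓ ∈ r '' {v | ({w | T.Adj v w} : Set α).ncard = 1} :=
    mem_of_minimal_connected_induce (hleaf.image r) (by rintro _ ⟨v, hv, rfl⟩; exact hS₁ v hv)
      hS₂ (fun t ht => hS₃ t fun v hv => ht ⟨v, hv, rfl⟩) hℓS hℓnbr
  have hdeg₃ := (hr v₀ hv₀).1
  have hbeyond : ∀ x, T.Adj (r v₀) x → x ∉ S → ∃ (v : α) (W : T.Walk x v),
      r v₀ ∉ W.support ∧ ({w | T.Adj v w} : Set α).ncard = 1 ∧ r v = r v₀ := by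
    intro x hx hxS
    obtain ⟨v, W, hW, hv⟩ := hT.isAcyclic.exists_walk_avoiding_to_ncard_neighborSet_eq_one hx
    obtain ⟨Q, hQ⟩ := hT.connected.exists_isPath v (r v)
    have hℓQ : r v₀ ∈ Q.support :=
      ((W.mem_support_append_iff Q).mp <| hT.isAcyclic.mem_support_of_adj_of_notMem_of_mem
        hS₂.preconnected hℓS hx hxS (hS₁ v hv) (W.append Q)).resolve_left hW
    exact ⟨v, W, hW, hv, ((hr v hv).2 Q hQ _ hℓQ hdeg₃).symm⟩
  obtain ⟨x₁, ⟨hx₁, hx₁S⟩, x₂, ⟨hx₂, hx₂S⟩, hx₁₂⟩ :=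
    Set.nontrivial_diff_of_subsingleton_inter (hdeg₃ ▸ by norm_num) hℓnbr
  obtain ⟨v₁, W₁, hW₁, hv₁, hrv₁⟩ := hbeyond x₁ hx₁ hx₁S
  obtain ⟨v₂, W₂, hW₂, hv₂, hrv₂⟩ := hbeyond x₂ hx₂ hx₂S
  refine ⟨v₁, v₂, ?_, hv₁, hv₂, hrv₁, hrv₂⟩
  rintro rfl
  have := hT.isAcyclic.mem_support_of_adj_of_adj hx₁ hx₂ hx₁₂ (W₁.append W₂.reverse)
  simp [Walk.mem_support_append_iff, hW₁, hW₂] at this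

/-- in the setting of the trunk of a tree `T` with maximum degree `3`
and `k ≥ 3` leaves, every leaf `ℓ` of the trunk `S` equals `r v` for at least two
distinct leaves `v` of `T`. -/
theorem stmt_13 {α : Type*} [Fintype α] (T : SimpleGraph α) (hT : T.IsTree)
    (k : ℕ) (hk : 3 ≤ k)
    (hleaves : ({v | ({w | T.Adj v w} : Set α).ncard = 1} : Set α).ncard = k)
    (hdeg : ∀ v : α, ({w | T.Adj v w} : Set α).ncard ≤ 3)
    (r : α → α)
    (hr : ∀ v : α, ({w | T.Adj v w} : Set α).ncard = 1 →
      ({w | T.Adj (r v) w} : Set α).ncard = 3 ∧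
      ∀ (p : T.Walk v (r v)), p.IsPath →
        ∀ w ∈ p.support, ({x | T.Adj w x} : Set α).ncard = 3 → w = r v)
    (S : Set α)
    (hS₁ : ∀ v : α, ({w | T.Adj v w} : Set α).ncard = 1 → r v ∈ S)
    (hS₂ : (T.induce S).Connected)
    (hS₃ : ∀ S' : Set α, (∀ v : α, ({w | T.Adj v w} : Set α).ncard = 1 → r v ∈ S') →
      (T.induce S').Connected → S ⊆ S') :
    ∀ ℓ ∈ S, ({y | y ∈ S ∧ T.Adj ℓ y} : Set α).ncard ≤ 1 →
      ∃ v w : α, v ≠ w ∧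
        ({x | T.Adj v x} : Set α).ncard = 1 ∧
        ({x | T.Adj w x} : Set α).ncard = 1 ∧
        r v = ℓ ∧ r w = ℓ :=
  stmt_13_general T hT k hk hleaves r hr S hS₁ hS₂ hS₃
end

section
/- Let G be a bipartite graph with parts V₁ of size m and V₂ of size n, where 2 ≤ m ≤ n. Then there exists a tree T with m leaves and two families F₁, F₂ of subtrees of T such that the bipartite intersection graph between F₁ and F₂ is isomorphic to G (i.e., there are bijections V₂ → F₁ and V₁ → F₂ under which adjacency corresponds exactly to nonempty intersection of subtrees). -/
/-- `S` is a subtree of `T`: a nonempty set of vertices inducing a connected subgraph. -/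
def IsSubtree {α : Type*} (T : SimpleGraph α) (S : Set α) : Prop :=
  S.Nonempty ∧ (T.induce S).Connected

/-!
Realize `G` on the star `K_{1,m}` with center `none` and leaves `some j` (one per vertex `j`
of the smaller part): vertex `j` becomes the leaf `{some j}`, and vertex `i` of the other part
becomes the center together with the leaves of its neighbours. Every set containing the center
of a star is a subtree, and such a set meets the leaf `{some j}` exactly when it contains it.
-/

namespace SimpleGraph

variable {V : Type*}

lemma isSubtree_singleton (T : SimpleGraph V) (x : V) : IsSubtree T {x} :=
  ⟨Set.singleton_nonempty x, @Connected.mk _ _ Preconnected.of_subsingleton ⟨⟨x, rfl⟩⟩⟩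

lemma isSubtree_starGraph_of_mem {r : V} {S : Set V} (hr : r ∈ S) :
    IsSubtree (starGraph r) S :=
  ⟨⟨r, hr⟩, Connected.of_isUniversal (v := ⟨r, hr⟩) fun _ hw =>
    starGraph_center_adj (Subtype.coe_ne_coe.mpr hw)⟩

lemma neighborSet_starGraph_center (r : V) : (starGraph r).neighborSet r = {r}ᶜ :=
  isUniversal_starGraph_self.neighborSet_eq

lemma neighborSet_starGraph_of_ne {r v : V} (hv : v ≠ r) :
    (starGraph r).neighborSet v = {r} := by
  ext w
  simp only [mem_neighborSet, starGraph_adj, Set.mem_singleton_iff]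
  grind

lemma setOf_ncard_neighborSet_eq_one_starGraph [Finite V] (r : V) (hV : Nat.card V ≠ 2) :
    {v | ((starGraph r).neighborSet v).ncard = 1} = {r}ᶜ := by
  ext v
  rcases eq_or_ne v r with rfl | hv
  · have hdeg : ({v}ᶜ : Set V).ncard = Nat.card V - 1 := by
      rw [Set.ncard_compl, Set.ncard_singleton]
    have hpos : 0 < Nat.card V := Nat.card_pos_iff.mpr ⟨⟨v⟩, ‹_›⟩
    simp only [Set.mem_ofPred_eq, neighborSet_starGraph_center, hdeg, Set.mem_compl_iff,
      Set.mem_singleton_iff, not_true_eq_false, iff_false]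
    omega
  · simp [neighborSet_starGraph_of_ne hv, hv]

end SimpleGraph

open SimpleGraph in
theorem stmt_14_general (m n : ℕ) (hm : 2 ≤ m) (E : Fin m → Fin n → Prop) :
    ∃ (β : Type) (_ : Fintype β) (T : SimpleGraph β)
      (f₁ : Fin n → Set β) (f₂ : Fin m → Set β),
      T.IsTree ∧
      ({v | ({w | T.Adj v w} : Set β).ncard = 1} : Set β).ncard = m ∧
      (∀ i, IsSubtree T (f₁ i)) ∧ (∀ j, IsSubtree T (f₂ j)) ∧
      (∀ j i, E j i ↔ (f₁ i ∩ f₂ j).Nonempty) := by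
  refine ⟨Option (Fin m), inferInstance, starGraph none,
    fun i => insert none (some '' {j | E j i}), fun j => {some j},
    isTree_starGraph none, ?_, fun i => isSubtree_starGraph_of_mem (Set.mem_insert _ _),
    fun j => isSubtree_singleton _ _, fun j i => ?_⟩
  · have hcard : Nat.card (Option (Fin m)) = m + 1 := by simp
    rw [show {v | ({w | (starGraph none).Adj v w} : Set (Option (Fin m))).ncard = 1} =
        {v | ((starGraph none).neighborSet v).ncard = 1} from rfl,
      setOf_ncard_neighborSet_eq_one_starGraph none (by omega), Set.ncard_compl,
      Set.ncard_singleton, hcard, Nat.add_sub_cancel]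
  · simp [Set.inter_singleton_nonempty]

/-- every bipartite graph with parts of sizes `2 ≤ m ≤ n` (given by the
cross-adjacency relation `E`) is realized as the bipartite intersection graph of two
families of subtrees of a tree with `m` leaves. -/
theorem stmt_14 (m n : ℕ) (hm : 2 ≤ m) (hmn : m ≤ n) (E : Fin m → Fin n → Prop) :
    ∃ (β : Type) (_ : Fintype β) (T : SimpleGraph β)
      (f₁ : Fin n → Set β) (f₂ : Fin m → Set β),
      T.IsTree ∧
      ({v | ({w | T.Adj v w} : Set β).ncard = 1} : Set β).ncard = m ∧
      (∀ i, IsSubtree T (f₁ i)) ∧ (∀ j, IsSubtree T (f₂ j)) ∧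
      (∀ j i, E j i ↔ (f₁ i ∩ f₂ j).Nonempty) :=
  stmt_14_general m n hm E
end

section
/- Fix an integer k ≥ 17 and set c = (2/ln 2)·(ln k)/k. Then for all sufficiently large n there exists a bipartite graph G ⊆ K_{k,n} (with parts of sizes k and n) such that neither G nor its bipartite complement contains a complete bipartite subgraph K_{a,b} with a = ⌈ck⌉ and b = ⌈cn⌉ (a vertices from the part of size k, b vertices from the part of size n). -/
/-!
Instead of a random graph, join `i` to `j` when the `i`-th binary digit of `j` is set. As `j` runs
below `n`, the digit patterns on `Fin k` repeat with period `2 ^ k`, so each pattern occurs at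
most `n / 2 ^ k + 1` times. A set `A` of `a ≥ 2 log₂ k` rows is monochromatic on only
`2 ^ (k - a) ≤ 2 ^ k / k ^ 2` of the patterns, hence on fewer than `2n / k ≤ cn` columns once
`n ≥ 2 ^ k`.
-/

open Finset

theorem card_le_div_add_one_of_mod_eq {n p : ℕ} {s : Finset (Fin n)}
    (h : ∀ j ∈ s, ∀ j' ∈ s, (j : ℕ) % p = j' % p) : #s ≤ n / p + 1 := by
  calc #s ≤ #(range (n / p + 1)) := card_le_card_of_injOn (fun j => (j : ℕ) / p) ?_ ?_
    _ = n / p + 1 := card_range _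
  · intro j _
    simpa [Nat.lt_succ_iff] using Nat.div_le_div_right j.isLt.le
  · intro j hj j' hj' hjj'
    ext
    rw [← Nat.div_add_mod j p, ← Nat.div_add_mod j' p, show (j : ℕ) / p = j' / p from hjj',
      h j hj j' hj']

theorem Nat.mod_two_pow_eq_of_testBit_eq {k j j' : ℕ} (h : ∀ i < k, j.testBit i = j'.testBit i) :
    j % 2 ^ k = j' % 2 ^ k :=
  Nat.eq_of_testBit_eq fun i => by
    by_cases hi : i < k <;> simp [hi, h]

theorem card_filter_forall_mem_eq_const {α β : Type*} [Fintype α] [DecidableEq α] [Fintype β]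
    (A : Finset α) (b : β) [DecidablePred fun f : α → β => ∀ i ∈ A, f i = b] :
    #{f : α → β | ∀ i ∈ A, f i = b} = Fintype.card β ^ (Fintype.card α - #A) := by
  have : ({f : α → β | ∀ i ∈ A, f i = b} : Finset _) =
      Fintype.piFinset fun i => if i ∈ A then {b} else univ := by
    ext f
    simp only [mem_filter, mem_univ, true_and, Fintype.mem_piFinset]
    refine ⟨fun h i => ?_, fun h i hi => by simpa [hi] using h i⟩
    split_ifs with hi <;> simp [h, hi]
  simp only [this, Fintype.card_piFinset, apply_ite card, card_singleton, card_univ]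
  rw [prod_ite, prod_const_one, one_mul, prod_const, filter_not, filter_mem_eq_inter, univ_inter,
    ← compl_eq_univ_sdiff, card_compl]

theorem card_le_of_testBit_eq {k n : ℕ} {A : Finset (Fin k)} {B : Finset (Fin n)} {b : Bool}
    (h : ∀ i ∈ A, ∀ j ∈ B, (j : ℕ).testBit i = b) : #B ≤ (n / 2 ^ k + 1) * 2 ^ (k - #A) := by
  let bits : Fin n → Fin k → Bool := fun j i => (j : ℕ).testBit i
  calc #B ≤ (n / 2 ^ k + 1) * #{f : Fin k → Bool | ∀ i ∈ A, f i = b} :=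
        card_le_mul_card_image_of_maps_to (f := bits) (by simp +contextual [bits, h]) _
          fun f _ => card_le_div_add_one_of_mod_eq fun j hj j' hj' =>
            Nat.mod_two_pow_eq_of_testBit_eq fun i hi => by
              simp only [mem_filter] at hj hj'
              exact congrFun (hj.2.trans hj'.2.symm) ⟨i, hi⟩
    _ = (n / 2 ^ k + 1) * 2 ^ (k - #A) := by
      simp only [card_filter_forall_mem_eq_const, Fintype.card_bool, Fintype.card_fin]

theorem sq_le_two_pow_ceil (k : ℕ) :
    k ^ 2 ≤ 2 ^ ⌈2 / Real.log 2 * (Real.log k / k) * k⌉₊ := by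
  rcases Nat.eq_zero_or_pos k with rfl | hk
  · simp
  have hk' : (0 : ℝ) < k := by exact_mod_cast hk
  have hlog2 : 0 < Real.log 2 := Real.log_pos one_lt_two
  suffices (k : ℝ) ^ 2 ≤ 2 ^ ⌈2 / Real.log 2 * (Real.log k / k) * k⌉₊ by exact_mod_cast this
  calc (k : ℝ) ^ 2 = Real.exp (2 / Real.log 2 * (Real.log k / k) * k * Real.log 2) := by
        rw [← Real.exp_log (pow_pos hk' 2), Real.log_pow]
        congr 1
        field_simp
        push_cast
        ring
    _ ≤ Real.exp (⌈2 / Real.log 2 * (Real.log k / k) * k⌉₊ * Real.log 2) := by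
        gcongr; exact Nat.le_ceil _
    _ = 2 ^ ⌈2 / Real.log 2 * (Real.log k / k) * k⌉₊ := by
        rw [Real.exp_nat_mul, Real.exp_log two_pos]

theorem lt_ceil_of_mul_sq_le {k n X : ℕ} (hk : 2 ≤ k) (hn : 0 < n) (hX : X * k ^ 2 ≤ 2 * n) :
    X < ⌈2 / Real.log 2 * (Real.log k / k) * n⌉₊ := by
  have hk' : (2 : ℝ) ≤ k := by exact_mod_cast hk
  have hn' : (0 : ℝ) < n := by exact_mod_cast hn
  have hX' : (X : ℝ) * k ^ 2 ≤ 2 * n := by exact_mod_cast hX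
  have hlog : 1 ≤ Real.log k / Real.log 2 :=
    (one_le_div (Real.log_pos one_lt_two)).mpr (Real.log_le_log two_pos hk')
  rw [Nat.lt_ceil]
  calc (X : ℝ) ≤ 2 * n / k ^ 2 := by rw [le_div_iff₀ (by positivity)]; exact hX'
    _ < 2 * n / k := by gcongr; nlinarith
    _ = 2 / k * n * 1 := by ring
    _ ≤ 2 / k * n * (Real.log k / Real.log 2) := by gcongr
    _ = 2 / Real.log 2 * (Real.log k / k) * n := by ring

/-- fix `k ≥ 17` and `c = (2/ln 2)·(ln k)/k`.  For all sufficiently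
large `n` there is a bipartite graph `E` between parts of sizes `k` and `n` such
that neither `E` nor its bipartite complement contains `K_{a,b}` with `a = ⌈ck⌉`,
`b = ⌈cn⌉`. -/
theorem stmt_16 (k : ℕ) (hk : 17 ≤ k) :
    ∃ N : ℕ, ∀ n : ℕ, N ≤ n →
      ∃ E : Fin k → Fin n → Prop,
        ∀ (A : Finset (Fin k)) (B : Finset (Fin n)),
          A.card = ⌈2 / Real.log 2 * (Real.log k / k) * k⌉₊ →
          B.card = ⌈2 / Real.log 2 * (Real.log k / k) * n⌉₊ →
          ¬(∀ i ∈ A, ∀ j ∈ B, E i j) ∧ ¬(∀ i ∈ A, ∀ j ∈ B, ¬E i j) := by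
  refine ⟨2 ^ k, fun n hn => ⟨fun i j => (j : ℕ).testBit i, fun A B hA hB => ?_⟩⟩
  have hAk : #A ≤ k := by simpa using card_le_univ A
  have hpow : 2 ^ (k - #A) * k ^ 2 ≤ 2 ^ k := by
    calc 2 ^ (k - #A) * k ^ 2 ≤ 2 ^ (k - #A) * 2 ^ #A :=
          Nat.mul_le_mul_left _ (hA ▸ sq_le_two_pow_ceil k)
      _ = 2 ^ k := by rw [← pow_add, Nat.sub_add_cancel hAk]
  have hB_large : (n / 2 ^ k + 1) * 2 ^ (k - #A) < #B := by
    rw [hB]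
    refine lt_ceil_of_mul_sq_le (by omega) (lt_of_lt_of_le (Nat.two_pow_pos k) hn) ?_
    calc (n / 2 ^ k + 1) * 2 ^ (k - #A) * k ^ 2 ≤ (n / 2 ^ k + 1) * 2 ^ k := by
          rw [mul_assoc]; gcongr
      _ ≤ 2 * n := by nlinarith [Nat.div_mul_le_self n (2 ^ k)]
  have hnot_const : ∀ b : Bool, ¬∀ i ∈ A, ∀ j ∈ B, (j : ℕ).testBit i = b := fun b h =>
    (card_le_of_testBit_eq h).not_gt hB_large
  exact ⟨hnot_const true, fun h => hnot_const false fun i hi j hj => by simpa using h i hi j hj⟩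
end

section
/- For every k ≥ 17, the inequality ((2 ln k)/(ln 2))² > 1 holds, and more generally for c = (2/ln 2)(ln k)/k and any rational r slightly greater than c with r < 1/2, one has 2^{c²k} · r^r · (1−r)^{1−r} > 1. -/
/-!
Write `c = 2 ln k / (k ln 2)`, so that `2 ^ (c²k) = exp (2 c ln k)` and `kc = 2 ln k / ln 2 > 1`.
From `kc > 1` we get `-c ln c < c ln k`, and by continuity `-r ln r < c ln k` for `r` close to `c`.
Then `2 c ln k + r ln r + (1 - r) ln (1 - r) > -r ln r + (1 - r) ln (1 - r)`, which is positive
for `0 < r < 1/2` by concavity of `ln`.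
-/

open Real

theorem mul_log_lt_one_sub_mul_log_one_sub {x : ℝ} (hx0 : 0 < x) (hx : x < 1 / 2) :
    x * log x < (1 - x) * log (1 - x) := by
  -- the secant slope of `log` through `1` decreases, and `x < 1 - x`
  have hslope := strictConcaveOn_log_Ioi.secant_strict_mono (a := 1) (x := x) (y := 1 - x)
    (Set.mem_Ioi.2 one_pos) hx0 (Set.mem_Ioi.2 (by linarith)) (by linarith) (by linarith)
    (by linarith)
  rw [log_one, sub_zero, sub_zero, sub_sub_cancel_left, div_neg, ← neg_div_neg_eq (log x),
    neg_sub, neg_div, neg_lt_neg_iff, div_lt_div_iff₀ (by linarith) hx0] at hslope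
  linarith

theorem one_lt_exp_mul_rpow_mul_one_sub_rpow {r a : ℝ} (hr0 : 0 < r) (hr : r < 1 / 2)
    (ha : negMulLog r ≤ a) : 1 < exp (2 * a) * r ^ r * (1 - r) ^ (1 - r) := by
  rw [rpow_def_of_pos hr0, rpow_def_of_pos (by linarith), ← exp_add, ← exp_add, one_lt_exp_iff]
  have := mul_log_lt_one_sub_mul_log_one_sub hr0 hr
  rw [negMulLog, neg_mul] at ha
  linarith

theorem negMulLog_lt_mul_log {c K : ℝ} (hc : 0 < c) (hK : 1 < K * c) :
    negMulLog c < c * log K := by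
  have hlog : log c⁻¹ < log K :=
    log_lt_log (inv_pos.2 hc) (by rwa [inv_lt_iff_one_lt_mul₀ hc])
  rw [log_inv] at hlog
  rw [negMulLog, neg_mul, ← mul_neg]
  exact mul_lt_mul_of_pos_left hlog hc

theorem exists_forall_negMulLog_lt {c a : ℝ} (h : negMulLog c < a) :
    ∃ δ > 0, ∀ r, c < r → r < c + δ → negMulLog r < a := by
  obtain ⟨δ, hδ, hball⟩ := Metric.eventually_nhds_iff.1
    (continuous_negMulLog.continuousAt.eventually_lt continuousAt_const h)
  refine ⟨δ, hδ, fun r hcr hrδ ↦ hball ?_⟩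
  rw [Real.dist_eq, abs_of_pos (sub_pos.2 hcr)]
  linarith

theorem one_lt_two_mul_log_div_log_two {x : ℝ} (hx : 2 ≤ x) : 1 < 2 * log x / log 2 := by
  have hlog2 : 0 < log 2 := log_pos one_lt_two
  rw [one_lt_div hlog2]
  linarith [log_le_log two_pos hx]

/-- for every integer `k ≥ 17` one has `((2 ln k)/(ln 2))² > 1`, and
with `c = (2/ln 2)(ln k)/k`, for every rational `r` slightly greater than `c` with
`r < 1/2` one has `2^(c²k) · r^r · (1-r)^(1-r) > 1`. -/
theorem stmt_17 (k : ℕ) (hk : 17 ≤ k) :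
    (2 * Real.log k / Real.log 2) ^ 2 > 1 ∧
    ∃ δ : ℝ, 0 < δ ∧ ∀ r : ℚ,
      2 / Real.log 2 * (Real.log k / k) < (r : ℝ) →
      (r : ℝ) < 2 / Real.log 2 * (Real.log k / k) + δ →
      (r : ℝ) < 1 / 2 →
      (2 : ℝ) ^ ((2 / Real.log 2 * (Real.log k / k)) ^ 2 * k) *
        (r : ℝ) ^ (r : ℝ) * (1 - (r : ℝ)) ^ (1 - (r : ℝ)) > 1 := by
  have hk2 : (2 : ℝ) ≤ k := by exact_mod_cast (by omega : 2 ≤ k)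
  have hkc := one_lt_two_mul_log_div_log_two hk2
  have hlog2 : 0 < log 2 := log_pos one_lt_two
  have hlogk : 0 < log k := log_pos (by linarith)
  set c := 2 / log 2 * (log k / k) with hc
  have hc0 : 0 < c := by positivity
  have hck : 2 * log k / log 2 = k * c := by rw [hc]; field_simp
  obtain ⟨δ, hδ, hnear⟩ := exists_forall_negMulLog_lt (negMulLog_lt_mul_log hc0 (hck ▸ hkc))
  refine ⟨one_lt_pow₀ hkc two_ne_zero, δ, hδ, fun r hcr hrδ hr ↦ ?_⟩
  have hexp : (2 : ℝ) ^ (c ^ 2 * k) = exp (2 * (c * log k)) := by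
    rw [rpow_def_of_pos two_pos, hc]
    field_simp
  rw [hexp]
  exact one_lt_exp_mul_rpow_mul_one_sub_rpow (hc0.trans hcr) hr (hnear r hcr hrδ).le
end
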